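/- Assume p ≡ 3 (mod 4). Suppose λ ∈ K̄ has order 2 and there is an odd natural number n with λ(z) = −zⁿ for all z ∈ (ℤ/p)*. Then the only solutions of xⁿ = x in (ℤ/p)* are x = 1 and x = −1. -/

import Mathlib

instance (X : Type*) [DecidableEq X] : DecidableEq (OnePoint X) :=
  inferInstanceAs (DecidableEq (Option X))

/-- The translation `z ↦ z + a` on `ℤ/p ∪ {∞}`, fixing `∞`. -/
def ptrans (p : ℕ) (a : ZMod p) : Equiv.Perm (OnePoint (ZMod p)) :=
  Equiv.optionCongr (Equiv.addRight a)

/-- The map `z ↦ a z` on `ℤ/p ∪ {∞}`, fixing `∞`, for `a ≠ 0`. -/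
def pmul (p : ℕ) [Fact p.Prime] (a : ZMod p) (ha : a ≠ 0) : Equiv.Perm (OnePoint (ZMod p)) :=
  Equiv.optionCongr (Equiv.mulLeft₀ a ha)

/-- Multiplication by `a` extended to `ℤ/p ∪ {∞}` (with `a·∞ = ∞`). -/
def opSmul (p : ℕ) (a : ZMod p) : OnePoint (ZMod p) → OnePoint (ZMod p) :=
  fun x => Option.map (fun z => a * z) x

/-- Underlying function of the map `z ↦ -1/z`. -/
def negInvFun (p : ℕ) : OnePoint (ZMod p) → OnePoint (ZMod p)
  | Option.none => Option.some (0 : ZMod p)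
  | Option.some z => if z = 0 then Option.none else Option.some (-z⁻¹ : ZMod p)

/-- The permutation `z ↦ -1/z` of `ℤ/p ∪ {∞}` (sending `0 ↦ ∞` and `∞ ↦ 0`). -/
def negInvPerm (p : ℕ) [Fact p.Prime] : Equiv.Perm (OnePoint (ZMod p)) :=
  Function.Involutive.toPerm (negInvFun p) (by
    intro x
    match x with
    | Option.none => simp [negInvFun]; rfl
    | Option.some z =>
      by_cases hz : z = 0
      · simp [negInvFun, hz]; rfl
      · have h1 : (-z⁻¹ : ZMod p) ≠ 0 := by simp [hz]
        simp [negInvFun, hz, h1, inv_neg, inv_inv]; rfl)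

/-- The involution `(0 ∞)(1 3)(2 6)(4 5)`. -/
def inv1 (p : ℕ) : Equiv.Perm (OnePoint (ZMod p)) :=
  Equiv.swap ((0 : ZMod p) : OnePoint (ZMod p)) OnePoint.infty *
  Equiv.swap ((1 : ZMod p) : OnePoint (ZMod p)) ((3 : ZMod p) : OnePoint (ZMod p)) *
  Equiv.swap ((2 : ZMod p) : OnePoint (ZMod p)) ((6 : ZMod p) : OnePoint (ZMod p)) *
  Equiv.swap ((4 : ZMod p) : OnePoint (ZMod p)) ((5 : ZMod p) : OnePoint (ZMod p))

/-- The involution `(0 ∞)(1 5)(2 3)(4 6)`. -/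
def inv2 (p : ℕ) : Equiv.Perm (OnePoint (ZMod p)) :=
  Equiv.swap ((0 : ZMod p) : OnePoint (ZMod p)) OnePoint.infty *
  Equiv.swap ((1 : ZMod p) : OnePoint (ZMod p)) ((5 : ZMod p) : OnePoint (ZMod p)) *
  Equiv.swap ((2 : ZMod p) : OnePoint (ZMod p)) ((3 : ZMod p) : OnePoint (ZMod p)) *
  Equiv.swap ((4 : ZMod p) : OnePoint (ZMod p)) ((6 : ZMod p) : OnePoint (ZMod p))

/-- The set of nonzero squares in `ℤ/p`. -/
def Rset (p : ℕ) : Set (ZMod p) := {a | a ≠ 0 ∧ IsSquare a}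

/-- The set of nonsquares in `(ℤ/p)*`. -/
def Nset (p : ℕ) : Set (ZMod p) := {a | a ≠ 0 ∧ ¬ IsSquare a}

/-!
Let `s = t₁ λ`. It cycles `0 ↦ ∞ ↦ 1 ↦ 0` and sends `z ≠ 0` to `1 - zⁿ`. The stabiliser of `∞`
in `G` has order `p (p - 1) / 2`, so the translations form its normal Sylow `p`-subgroup; an
element of `G` fixing `∞`, `0`, `1` therefore commutes with every translation and is trivial, and
`s³ = 1`. As `λ² = 1`, `z ↦ zⁿ` is an involution. If `wⁿ = w` with `w ∉ {0, 1}`, following `w`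
around `s³ = 1` gives `2 (1 - w)ⁿ = 1`; for `w = -1` this reads `2 · 2ⁿ = 1`, so `(1 - w)ⁿ = 2ⁿ`
and `w = -1`.
-/

open Equiv OnePoint

section Translations

variable {p : ℕ}

@[simp]
theorem ptrans_coe (a z : ZMod p) : ptrans p a z = ((z + a : ZMod p) : OnePoint (ZMod p)) := rfl

@[simp]
theorem ptrans_infty (a : ZMod p) : ptrans p a ∞ = ∞ := rfl

variable (p) in
def ptransHom : Multiplicative (ZMod p) →* Perm (OnePoint (ZMod p)) where
  toFun a := ptrans p a.toAdd
  map_one' := by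
    ext z
    cases z <;> simp
  map_mul' a b := by
    ext z
    cases z <;> simp [add_assoc, add_comm b.toAdd]

@[simp]
theorem ptransHom_apply (a : Multiplicative (ZMod p)) : ptransHom p a = ptrans p a.toAdd := rfl

theorem ptransHom_injective : Function.Injective (ptransHom p) := fun a b h => by
  simpa using congr($h (0 : ZMod p))

theorem ptrans_one_pow (m : ℕ) : ptrans p 1 ^ m = ptrans p m := by
  simpa using (map_pow (ptransHom p) (Multiplicative.ofAdd 1) m).symm

end Translations

theorem Subgroup.normal_of_card_eq_prime_of_index_lt {H : Type*} [Group H] [Finite H] {p : ℕ}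
    [Fact p.Prime] {P : Subgroup H} (hcard : Nat.card P = p) (hindex : P.index < p) :
    P.Normal := by
  have hindex_pos : 0 < P.index := Nat.pos_of_ne_zero P.index_ne_zero_of_finite
  have hpP : IsPGroup p P := IsPGroup.of_card (n := 1) (by rw [hcard, pow_one])
  let S := hpP.toSylow (Nat.not_dvd_of_pos_of_lt hindex_pos hindex)
  -- The number of Sylow `p`-subgroups is `1 mod p` and divides `P.index < p`.
  have : Subsingleton (Sylow p H) := by
    have hle : Nat.card (Sylow p H) ≤ P.index := Nat.le_of_dvd hindex_pos S.card_dvd_index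
    have hmod := card_sylow_modEq_one p H
    rw [Nat.ModEq, Nat.mod_eq_of_lt (hle.trans_lt hindex),
      Nat.mod_eq_of_lt (Fact.out : p.Prime).one_lt] at hmod
    exact Finite.card_le_one_iff_subsingleton.mp hmod.le
  simpa [S] using S.normal_of_subsingleton

section TransitiveGroup

variable {p : ℕ} [Fact p.Prime] {G : Subgroup (Perm (OnePoint (ZMod p)))}

theorem exists_conj_ptrans_eq_ptrans
    (htrans : ∀ x y : OnePoint (ZMod p), ∃ g ∈ G, g x = y)
    (hcard : Nat.card G = (p ^ 3 - p) / 2)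
    (htransl : ∀ a : ZMod p, ptrans p a ∈ G)
    {g : Perm (OnePoint (ZMod p))} (hg : g ∈ G) (hginf : g ∞ = ∞) (a : ZMod p) :
    ∃ b : ZMod p, g * ptrans p a * g⁻¹ = ptrans p b := by
  have : MulAction.IsPretransitive G (OnePoint (ZMod p)) :=
    ⟨fun x y => by obtain ⟨g, hg, hgxy⟩ := htrans x y; exact ⟨⟨g, hg⟩, hgxy⟩⟩
  have hrange : (ptransHom p).range ≤ G := by
    rintro _ ⟨a, rfl⟩
    exact htransl _
  let T : Subgroup G := (ptransHom p).range.subgroupOf G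
  let B : Subgroup G := MulAction.stabilizer G (∞ : OnePoint (ZMod p))
  have hTB : T ≤ B := by
    rintro t ⟨a, ha⟩
    show (t : Perm (OnePoint (ZMod p))) ∞ = ∞
    rw [← Subgroup.coe_subtype, ← ha]
    rfl
  have hTcard : Nat.card T = p := by
    rw [Nat.card_congr (Subgroup.subgroupOfEquivOfLe hrange).toEquiv,
      ← Nat.card_congr (MonoidHom.ofInjective ptransHom_injective).toEquiv,
      Nat.card_congr Multiplicative.toAdd, Nat.card_zmod]
  have hBindex : B.index = p + 1 := by
    rw [MulAction.index_stabilizer_of_transitive]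
    exact (Finite.card_option (α := ZMod p)).trans (by rw [Nat.card_zmod])
  have hrel : T.relIndex B < p := by
    have h1 := Subgroup.relIndex_mul_index hTB
    have h2 := T.index_mul_card
    rw [hBindex] at h1
    rw [hTcard, hcard, ← h1] at h2
    have hp := (Fact.out : p.Prime).pos
    by_contra! hle
    have : p * (p + 1) * p ≤ p ^ 3 := by
      calc p * (p + 1) * p ≤ T.relIndex B * (p + 1) * p := by gcongr
        _ ≤ p ^ 3 := h2 ▸ (Nat.div_le_self _ _).trans (Nat.sub_le _ _)
    nlinarith
  have hnormal : (T.subgroupOf B).Normal :=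
    Subgroup.normal_of_card_eq_prime_of_index_lt
      (by rw [Nat.card_congr (Subgroup.subgroupOfEquivOfLe hTB).toEquiv, hTcard]) hrel
  obtain ⟨b, hb⟩ := (Subgroup.normal_subgroupOf_iff hTB).mp hnormal
    ⟨ptrans p a, htransl a⟩ ⟨g, hg⟩ ⟨Multiplicative.ofAdd a, rfl⟩ hginf
  exact ⟨b.toAdd, hb.symm⟩

theorem eq_one_of_fixes_infty_zero_one
    (htrans : ∀ x y : OnePoint (ZMod p), ∃ g ∈ G, g x = y)
    (hcard : Nat.card G = (p ^ 3 - p) / 2)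
    (htransl : ∀ a : ZMod p, ptrans p a ∈ G)
    {g : Perm (OnePoint (ZMod p))} (hg : g ∈ G) (hginf : g ∞ = ∞)
    (hg0 : g (0 : ZMod p) = (0 : ZMod p)) (hg1 : g (1 : ZMod p) = (1 : ZMod p)) :
    g = 1 := by
  obtain ⟨b, hb⟩ := exists_conj_ptrans_eq_ptrans htrans hcard htransl hg hginf 1
  have hginv0 : g.symm (0 : ZMod p) = (0 : ZMod p) := by rw [Equiv.symm_apply_eq, hg0]
  obtain rfl : b = 1 := by
    simpa [hginv0, hg1] using congr($hb.symm ((0 : ZMod p) : OnePoint (ZMod p)))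
  have hcomm : Commute g (ptrans p 1) := mul_inv_eq_iff_eq_mul.mp hb
  ext z
  cases z with
  | infty => simpa using hginf
  | coe z =>
    simpa [ptrans_one_pow, hg0] using
      congr($((hcomm.pow_right z.val).eq) ((0 : ZMod p) : OnePoint (ZMod p)))

end TransitiveGroup

theorem pow_eq_self_iff_eq_one_or_eq_neg_one {K : Type*} [Field K] {n : ℕ} (hn : Odd n)
    (hinj : Function.Injective fun x : K => x ^ n)
    (htwo : ∀ w : K, w ≠ 0 → w ≠ 1 → w ^ n = w → 2 * (1 - w) ^ n = 1)
    {x : K} (hx : x ≠ 0) : x ^ n = x ↔ x = 1 ∨ x = -1 := by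
  refine ⟨fun hxn => or_iff_not_imp_left.mpr fun hx1 => ?_, ?_⟩
  · have hx2 := htwo x hx hx1 hxn
    have h2 : (2 : K) ≠ 0 := left_ne_zero_of_mul_eq_one hx2
    have hneg1 : (-1 : K) ≠ 1 := fun h => h2 (by linear_combination -h)
    have hm2 := htwo (-1) (neg_ne_zero.mpr one_ne_zero) hneg1 hn.neg_one_pow
    have : 1 - x = 1 - (-1) := hinj <| mul_left_cancel₀ h2 (hx2.trans hm2.symm)
    linear_combination -this
  · rintro (rfl | rfl)
    · exact one_pow n
    · exact hn.neg_one_pow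

section Involution

variable {p : ℕ} {lam : Perm (OnePoint (ZMod p))} {n : ℕ}

theorem pow_involutive_of_neg_pow [Fact p.Prime] (hn : Odd n) (hlam_sq : lam * lam = 1)
    (hlam : ∀ z : ZMod p, z ≠ 0 → lam z = ((-z ^ n : ZMod p) : OnePoint (ZMod p))) :
    Function.Involutive fun y : ZMod p => y ^ n := by
  intro y
  by_cases hy : y = 0
  · simp [hy, hn.pos.ne']
  · have hyn : (-y ^ n : ZMod p) ≠ 0 := by simpa using pow_ne_zero n hy
    have := congr($hlam_sq (y : OnePoint (ZMod p)))
    rw [Perm.mul_apply, hlam y hy, hlam _ hyn, Perm.one_apply, hn.neg_pow, neg_neg] at this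
    exact OnePoint.coe_injective this

theorem two_mul_one_sub_pow_eq_one (hinvol : Function.Involutive fun y : ZMod p => y ^ n)
    (hlam0 : lam (0 : ZMod p) = ∞)
    (hlam : ∀ z : ZMod p, z ≠ 0 → lam z = ((-z ^ n : ZMod p) : OnePoint (ZMod p)))
    (hcycle : (ptrans p 1 * lam) ^ 3 = 1) {w : ZMod p} (hw0 : w ≠ 0) (hw1 : w ≠ 1)
    (hwn : w ^ n = w) : 2 * (1 - w) ^ n = 1 := by
  set s := ptrans p 1 * lam
  have hs0 : s (0 : ZMod p) = ∞ := by simp [s, hlam0]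
  have hs : ∀ z : ZMod p, z ≠ 0 → s z = ((1 - z ^ n : ZMod p) : OnePoint (ZMod p)) := by
    intro z hz
    simp [s, hlam z hz, neg_add_eq_sub]
  have hw := congr($hcycle (w : OnePoint (ZMod p)))
  have h1w : 1 - w ≠ 0 := sub_ne_zero.mpr hw1.symm
  simp only [pow_succ, pow_zero, one_mul, Perm.mul_apply, Perm.one_apply] at hw
  rw [hs w hw0, hwn, hs _ h1w] at hw
  by_cases hu : 1 - (1 - w) ^ n = 0
  · rw [hu, hs0] at hw
    exact absurd hw (OnePoint.infty_ne_coe w)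
  · rw [hs _ hu] at hw
    have : (1 - (1 - w) ^ n) ^ n = ((1 - w) ^ n) ^ n := by
      rw [show ((1 - w) ^ n) ^ n = 1 - w from hinvol (1 - w)]
      linear_combination -(OnePoint.coe_injective hw)
    linear_combination -(hinvol.injective this)

end Involution

theorem main_case_fixed_points_of_power_general
    (p : ℕ) [Fact p.Prime]
    (G : Subgroup (Equiv.Perm (OnePoint (ZMod p))))
    (htrans : ∀ x y : OnePoint (ZMod p), ∃ g ∈ G, g x = y)
    (hcard : Nat.card G = (p ^ 3 - p) / 2)
    (htransl : ∀ a : ZMod p, ptrans p a ∈ G)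
    (lam : Equiv.Perm (OnePoint (ZMod p))) (hlamG : lam ∈ G)
    (hlam0 : lam (OnePoint.some (0 : ZMod p)) = OnePoint.infty)
    (hlaminf : lam OnePoint.infty = OnePoint.some (0 : ZMod p))
    (hlam2 : orderOf lam = 2)
    (n : ℕ) (hn : Odd n)
    (hlam : ∀ z : ZMod p, z ≠ 0 → lam (OnePoint.some z) = OnePoint.some (-z ^ n)) :
    ∀ x : ZMod p, x ≠ 0 → (x ^ n = x ↔ x = 1 ∨ x = -1) := by
  have hlam_sq : lam * lam = 1 := by rw [← sq, ← hlam2, pow_orderOf_eq_one]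
  have hinvol := pow_involutive_of_neg_pow hn hlam_sq hlam
  have hcycle : (ptrans p 1 * lam) ^ 3 = 1 := by
    have hs1 : lam (1 : ZMod p) = ((-1 : ZMod p) : OnePoint (ZMod p)) := by
      simpa using hlam 1 one_ne_zero
    apply eq_one_of_fixes_infty_zero_one htrans hcard htransl
      (G.pow_mem (G.mul_mem (htransl 1) hlamG) 3) <;>
    simp [pow_succ, hlam0, hlaminf, hs1]
  intro x hx
  exact pow_eq_self_iff_eq_one_or_eq_neg_one hn hinvol.injective
    (fun w hw0 hw1 hwn => two_mul_one_sub_pow_eq_one hinvol hlam0 hlam hcycle hw0 hw1 hwn) hx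

theorem main_case_fixed_points_of_power
    (p : ℕ) [Fact p.Prime] (hp2 : p ≠ 2) (hp3 : p % 4 = 3)
    (G : Subgroup (Equiv.Perm (OnePoint (ZMod p))))
    (htrans : ∀ x y : OnePoint (ZMod p), ∃ g ∈ G, g x = y)
    (hcard : Nat.card G = (p ^ 3 - p) / 2)
    (htransl : ∀ a : ZMod p, ptrans p a ∈ G)
    (lam : Equiv.Perm (OnePoint (ZMod p))) (hlamG : lam ∈ G)
    (hlam0 : lam (OnePoint.some (0 : ZMod p)) = OnePoint.infty)
    (hlaminf : lam OnePoint.infty = OnePoint.some (0 : ZMod p))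
    (hlam2 : orderOf lam = 2)
    (n : ℕ) (hn : Odd n)
    (hlam : ∀ z : ZMod p, z ≠ 0 → lam (OnePoint.some z) = OnePoint.some (-z ^ n)) :
    ∀ x : ZMod p, x ≠ 0 → (x ^ n = x ↔ x = 1 ∨ x = -1) :=
  main_case_fixed_points_of_power_general p G htrans hcard htransl lam hlamG hlam0 hlaminf hlam2 n
    hn hlam
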